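/- arXiv:cs/0506016 — 5 statements merged into one kernel-verified Lean document; each statement's English description precedes it below -/
import Mathlib

section
/- Given a probability distribution p_1, …, p_n on {1, …, n} with every p_i > 0, there exist natural numbers d_1, …, d_n and natural numbers m_1, …, m_n such that, writing x_i = m_i · 2^{-d_i}, the following hold: x_1 ≥ 0; x_i + 2^{-d_i} ≤ x_{i+1} for every 1 ≤ i < n; x_n + 2^{-d_n} ≤ 1; and d_i < log₂(1/p_i) + 2 for every i. (The intervals [x_i, x_i + 2^{-d_i}) are pairwise disjoint dyadic subintervals of [0,1) appearing in left-to-right order, which is exactly the statement that there is an alphabetic prefix-free binary code, equivalently a strict ordered binary tree, whose i-th leaf from the left has depth d_i < log₂(1/p_i) + 2.) -/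
/-!
Gilbert–Moore construction. Cut `[0,1)` into consecutive blocks of lengths `p i` and let
`c i` be the midpoint of the `i`-th block. With `d i = ⌈log₂(1/p i)⌉ + 1` the mesh `2^{-d i}`
is at most `p i / 2`, so the dyadic interval of that mesh containing `c i` stays inside the
`i`-th block; hence these intervals are disjoint, ordered and contained in `[0,1)`.
-/

open Finset

lemma floor_div_mul_le_and_lt_add {c w : ℝ} (hc : 0 ≤ c) (hw : 0 < w) :
    ⌊c / w⌋₊ * w ≤ c ∧ c < ⌊c / w⌋₊ * w + w := by
  have hle := Nat.floor_le (div_nonneg hc hw.le)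
  have hlt := Nat.lt_floor_add_one (c / w)
  constructor
  · calc ⌊c / w⌋₊ * w ≤ c / w * w := by gcongr
      _ = c := div_mul_cancel₀ c hw.ne'
  · calc c = c / w * w := (div_mul_cancel₀ c hw.ne').symm
      _ < (⌊c / w⌋₊ + 1) * w := by gcongr
      _ = ⌊c / w⌋₊ * w + w := by ring

lemma sub_lt_floor_div_mul_and_add_le {c w r : ℝ} (hc : 0 ≤ c) (hw : 0 < w) (hwr : w ≤ r) :
    c - r < ⌊c / w⌋₊ * w ∧ ⌊c / w⌋₊ * w + w ≤ c + r := by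
  obtain ⟨hle, hlt⟩ := floor_div_mul_le_and_lt_add hc hw
  constructor <;> linarith

lemma zpow_neg_ceil_logb_le {b q : ℝ} (hb : 1 < b) (hq : 0 < q) :
    b ^ (-(⌈Real.logb b (1 / q)⌉₊ : ℤ)) ≤ q := by
  have hpow : 1 / q ≤ b ^ ⌈Real.logb b (1 / q)⌉₊ := by
    rw [← Real.rpow_natCast, ← Real.logb_le_iff_le_rpow hb (by positivity)]
    exact Nat.le_ceil _
  rw [zpow_neg, zpow_natCast]
  exact inv_le_of_inv_le₀ hq (by rwa [← one_div])

lemma Fin.Iio_mk_add_one {n : ℕ} (i : Fin n) (h : i.val + 1 < n) :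
    Iio (⟨i.val + 1, h⟩ : Fin n) = Iic i := by
  ext j
  simp only [mem_Iio, mem_Iic, Fin.lt_def, Fin.le_def]
  omega

/-- Mehlhorn's theorem as disjoint ordered dyadic intervals: there exist codeword
lengths `d i` and positions `m i` so that the intervals `[mᵢ2^{-dᵢ}, (mᵢ+1)2^{-dᵢ})`
lie in `[0,1)` in left-to-right order, with `d i < log₂(1/p i) + 2`. -/
theorem stmt1 (n : ℕ) (hn : 0 < n) (p : Fin n → ℝ)
    (hp : ∀ i, 0 < p i) (hsum : ∑ i, p i = 1) :
    ∃ d m : Fin n → ℕ,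
      (0 : ℝ) ≤ (m ⟨0, hn⟩ : ℝ) * (2 : ℝ) ^ (-(d ⟨0, hn⟩ : ℤ)) ∧
      (∀ i : Fin n, ∀ h : i.val + 1 < n,
        (m i : ℝ) * (2 : ℝ) ^ (-(d i : ℤ)) + (2 : ℝ) ^ (-(d i : ℤ)) ≤
          (m ⟨i.val + 1, h⟩ : ℝ) * (2 : ℝ) ^ (-(d ⟨i.val + 1, h⟩ : ℤ))) ∧
      ((m ⟨n - 1, Nat.sub_lt hn one_pos⟩ : ℝ) *
          (2 : ℝ) ^ (-(d ⟨n - 1, Nat.sub_lt hn one_pos⟩ : ℤ)) +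
          (2 : ℝ) ^ (-(d ⟨n - 1, Nat.sub_lt hn one_pos⟩ : ℤ)) ≤ 1) ∧
      ∀ i, (d i : ℝ) < Real.logb 2 (1 / p i) + 2 := by
  set s : Fin n → ℝ := fun i => ∑ j ∈ Iio i, p j
  set d : Fin n → ℕ := fun i => ⌈Real.logb 2 (1 / p i)⌉₊ + 1
  set m : Fin n → ℕ := fun i => ⌊(s i + p i / 2) / (2 : ℝ) ^ (-(d i : ℤ))⌋₊
  have hs_nonneg (i : Fin n) : 0 ≤ s i := sum_nonneg fun j _ => (hp j).le
  have hs_add_le_one (i : Fin n) : s i + p i ≤ 1 := by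
    rw [sum_Iio_add_eq_sum_Iic, ← hsum]
    exact sum_le_sum_of_subset_of_nonneg (subset_univ _) fun j _ _ => (hp j).le
  have hs_next (i : Fin n) (h : i.val + 1 < n) : s ⟨i.val + 1, h⟩ = s i + p i := by
    simp only [s]
    rw [Fin.Iio_mk_add_one, sum_Iio_add_eq_sum_Iic]
  have hmesh (i : Fin n) : (2 : ℝ) ^ (-(d i : ℤ)) ≤ p i / 2 := by
    have := zpow_neg_ceil_logb_le one_lt_two (hp i)
    rw [show -(d i : ℤ) = -(⌈Real.logb 2 (1 / p i)⌉₊ : ℤ) - 1 by push_cast [d]; ring,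
      zpow_sub₀ two_ne_zero, zpow_one]
    linarith
  have hblock (i : Fin n) : s i < m i * (2 : ℝ) ^ (-(d i : ℤ)) ∧
      m i * (2 : ℝ) ^ (-(d i : ℤ)) + (2 : ℝ) ^ (-(d i : ℤ)) ≤ s i + p i := by
    obtain ⟨hlo, hhi⟩ := sub_lt_floor_div_mul_and_add_le
      (by linarith [hs_nonneg i, hp i] : 0 ≤ s i + p i / 2) (by positivity) (hmesh i)
    constructor <;> linarith
  refine ⟨d, m, by positivity, fun i h => ?_, ?_, fun i => ?_⟩
  · linarith [(hblock i).2, (hblock ⟨i.val + 1, h⟩).1, hs_next i h]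
  · linarith [(hblock ⟨n - 1, Nat.sub_lt hn one_pos⟩).2,
      hs_add_le_one ⟨n - 1, Nat.sub_lt hn one_pos⟩]
  · have hlog : 0 ≤ Real.logb 2 (1 / p i) := Real.logb_nonneg one_lt_two
      (by rw [le_div_iff₀ (hp i)]; linarith [hs_nonneg i, hs_add_le_one i])
    have := Nat.ceil_lt_add_one hlog
    push_cast [d]
    linarith
end

section
/- Let p_1, …, p_n be a probability distribution on {1, …, n} with every p_i > 0. For 1 ≤ i ≤ n set S_i = p_i/2 + ∑_{j=1}^{i-1} p_j and ℓ_i = ⌈log₂(2/p_i)⌉. Then for all i ≠ j, writing m = min(ℓ_i, ℓ_j), we have ⌊2^m · S_i⌋ ≠ ⌊2^m · S_j⌋; that is, the first min(ℓ_i, ℓ_j) bits of the binary expansions of S_i and S_j differ, so the code whose i-th codeword is the first ℓ_i bits of the binary expansion of S_i is prefix-free. -/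
/-! For `i < j` the gap `S j - S i` is at least `p i / 2 + p j / 2`, and the choice of `ℓ` makes
`2 ^ (-ℓ k) ≤ p k / 2`, so the gap is at least `2 ^ (-min (ℓ i) (ℓ j))`. Scaled by
`2 ^ min (ℓ i) (ℓ j)`, the two points are at least `1` apart and have different floors. -/

open Finset

lemma le_two_zpow_ceil_logb {r : ℝ} (hr : 0 ≤ r) : r ≤ (2 : ℝ) ^ ⌈Real.logb 2 r⌉ := by
  have h := Real.ceil_logb_natCast (b := 2) hr
  rw [Nat.cast_ofNat] at h
  rw [h]
  exact Int.self_le_zpow_clog Nat.one_lt_two r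

lemma two_zpow_neg_ceil_logb_le_half {x : ℝ} (hx : 0 < x) :
    (2 : ℝ) ^ (-⌈Real.logb 2 (2 / x)⌉) ≤ x / 2 := by
  rw [zpow_neg, inv_le_comm₀ (by positivity) (by positivity), inv_div]
  exact le_two_zpow_ceil_logb (by positivity)

lemma two_zpow_neg_min_le_add {a b : ℤ} {x y : ℝ} (ha : (2 : ℝ) ^ (-a) ≤ x)
    (hb : (2 : ℝ) ^ (-b) ≤ y) : (2 : ℝ) ^ (-min a b) ≤ x + y := by
  have := zpow_pos (two_pos (α := ℝ)) (-a)
  have := zpow_pos (two_pos (α := ℝ)) (-b)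
  rcases min_cases a b with ⟨h, -⟩ | ⟨h, -⟩ <;> rw [h] <;> linarith

lemma add_sum_Iio_le_sum_Iio {ι : Type*} [LinearOrder ι] [LocallyFiniteOrderBot ι]
    {f : ι → ℝ} (hf : ∀ k, 0 ≤ f k) {i j : ι} (hij : i < j) :
    f i + ∑ k ∈ Iio i, f k ≤ ∑ k ∈ Iio j, f k := by
  have hsub : insert i (Iio i) ⊆ Iio j := by
    intro k hk
    rcases mem_insert.1 hk with rfl | hk
    · exact mem_Iio.2 hij
    · exact mem_Iio.2 ((mem_Iio.1 hk).trans hij)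
  rw [← sum_insert notMem_Iio_self]
  exact sum_le_sum_of_subset_of_nonneg hsub fun k _ _ => hf k

lemma Int.floor_lt_floor_of_add_one_le {x y : ℝ} (h : x + 1 ≤ y) : ⌊x⌋ < ⌊y⌋ := by
  rw [Int.lt_iff_add_one_le, ← Int.floor_add_one]
  exact Int.floor_mono h

lemma floor_mul_lt_floor_mul_of_two_zpow_neg_le {m : ℤ} {x y : ℝ}
    (h : (2 : ℝ) ^ (-m) ≤ y - x) : ⌊(2 : ℝ) ^ m * x⌋ < ⌊(2 : ℝ) ^ m * y⌋ := by
  apply Int.floor_lt_floor_of_add_one_le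
  have hpos : (0 : ℝ) < 2 ^ m := by positivity
  have := mul_le_mul_of_nonneg_left h hpos.le
  rw [← zpow_add₀ two_ne_zero, add_neg_cancel, zpow_zero] at this
  linarith

theorem stmt2_general (n : ℕ) (p : Fin n → ℝ)
    (hp : ∀ i, 0 < p i)
    (S : Fin n → ℝ) (hS : ∀ i, S i = p i / 2 + ∑ j ∈ Finset.Iio i, p j)
    (ℓ : Fin n → ℤ) (hℓ : ∀ i, ℓ i = ⌈Real.logb 2 (2 / p i)⌉) :
    ∀ i j : Fin n, i ≠ j →
      ⌊(2 : ℝ) ^ (min (ℓ i) (ℓ j)) * S i⌋ ≠ ⌊(2 : ℝ) ^ (min (ℓ i) (ℓ j)) * S j⌋ := by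
  intro i j hij
  wlog hlt : i < j generalizing i j
  · rw [min_comm, ne_comm]
    exact this j i hij.symm (lt_of_le_of_ne (not_lt.1 hlt) hij.symm)
  have hgap : p i / 2 + p j / 2 ≤ S j - S i := by
    rw [hS, hS]
    linarith [add_sum_Iio_le_sum_Iio (fun k => (hp k).le) hlt]
  have hbits : (2 : ℝ) ^ (-min (ℓ i) (ℓ j)) ≤ p i / 2 + p j / 2 := by
    rw [hℓ, hℓ]
    exact two_zpow_neg_min_le_add (two_zpow_neg_ceil_logb_le_half (hp i))
      (two_zpow_neg_ceil_logb_le_half (hp j))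
  exact (floor_mul_lt_floor_mul_of_two_zpow_neg_le (hbits.trans hgap)).ne

/-- With `S i = p i / 2 + ∑_{j<i} p j` and `ℓ i = ⌈log₂(2 / p i)⌉`, the first
`min (ℓ i) (ℓ j)` bits of the binary expansions of `S i` and `S j` differ for `i ≠ j`,
so the code whose `i`-th codeword is the first `ℓ i` bits of `S i` is prefix-free. -/
theorem stmt2 (n : ℕ) (p : Fin n → ℝ)
    (hp : ∀ i, 0 < p i) (hsum : ∑ i, p i = 1)
    (S : Fin n → ℝ) (hS : ∀ i, S i = p i / 2 + ∑ j ∈ Finset.Iio i, p j)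
    (ℓ : Fin n → ℤ) (hℓ : ∀ i, ℓ i = ⌈Real.logb 2 (2 / p i)⌉) :
    ∀ i j : Fin n, i ≠ j →
      ⌊(2 : ℝ) ^ (min (ℓ i) (ℓ j)) * S i⌋ ≠ ⌊(2 : ℝ) ^ (min (ℓ i) (ℓ j)) * S j⌋ :=
  stmt2_general n p hp S hS ℓ hℓ
end

section
/- Given a probability distribution p_1, …, p_n on {1, …, n} with every p_i > 0, there exist natural numbers d_1, …, d_n such that, setting q_i = 2^{-d_i}, the numbers q_1, …, q_n form a probability distribution (that is, ∑_{i=1}^n 2^{-d_i} = 1), p_i < 4·q_i for every i, and D(P‖Q) = ∑_{i=1}^n p_i log₂(p_i/q_i) < 2. -/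
/-!
Round the Shannon code lengths `⌈log₂ (1 / p i)⌉` up: they satisfy Kraft's inequality
`∑ 2^{-d i} ≤ ∑ p i = 1` and `p i < 2 · 2^{-d i}`. Repeatedly shortening a longest word keeps
Kraft's inequality, because `2^M · ∑ 2^{-d i}` is an integer when `M = max d`, so the sum has
room for `2^{-M}` as long as it is `< 1`; this ends with `∑ 2^{-d i} = 1`. Shortening only
increases each `q i = 2^{-d i}`, so still `p i < 2 q i`, hence every `log₂ (p i / q i) < 1` and
`D(P‖Q) < ∑ p i = 1`.
-/

open Finset Real

noncomputable section

def kraftSum {ι : Type*} [Fintype ι] (d : ι → ℕ) : ℝ :=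
  ∑ i, (2 : ℝ) ^ (-(d i : ℤ))

def shannonLength (x : ℝ) : ℕ :=
  ⌈-logb 2 x⌉₊

end

lemma zpow_neg_shannonLength_le {x : ℝ} (hx : 0 < x) :
    (2 : ℝ) ^ (-(shannonLength x : ℤ)) ≤ x := by
  rw [shannonLength, ← rpow_intCast, ← le_logb_iff_rpow_le one_lt_two hx]
  push_cast
  linarith [Nat.le_ceil (-logb 2 x)]

lemma lt_two_mul_zpow_neg_shannonLength {x : ℝ} (hx : 0 < x) (hx1 : x ≤ 1) :
    x < 2 * (2 : ℝ) ^ (-(shannonLength x : ℤ)) := by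
  have hlog : 0 ≤ -logb 2 x := neg_nonneg.mpr (logb_nonpos one_lt_two hx.le hx1)
  rw [shannonLength, ← zpow_one_add₀ two_ne_zero, ← rpow_intCast,
    ← logb_lt_iff_lt_rpow one_lt_two hx]
  push_cast
  linarith [Nat.ceil_lt_add_one hlog]

section Kraft

variable {ι : Type*} [Fintype ι]

lemma kraftSum_add_le_one_of_lt_one {d : ι → ℕ} {M : ℕ} (hM : ∀ i, d i ≤ M)
    (h : kraftSum d < 1) : kraftSum d + (2 : ℝ) ^ (-(M : ℤ)) ≤ 1 := by
  have h2M : (0 : ℝ) < 2 ^ M := by positivity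
  have hscale : (2 : ℝ) ^ M * kraftSum d = ((∑ i, 2 ^ (M - d i) : ℕ) : ℝ) := by
    rw [kraftSum, mul_sum]
    push_cast
    refine sum_congr rfl fun i _ => ?_
    rw [← zpow_natCast, ← zpow_add₀ two_ne_zero, ← zpow_natCast, Nat.cast_sub (hM i)]
    ring_nf
  have hnat : (∑ i, 2 ^ (M - d i) : ℕ) + 1 ≤ 2 ^ M := by
    have : ((∑ i, 2 ^ (M - d i) : ℕ) : ℝ) < 2 ^ M := by
      rw [← hscale]; nlinarith
    exact_mod_cast this
  have : (2 : ℝ) ^ M * (kraftSum d + (2 : ℝ) ^ (-(M : ℤ))) ≤ 2 ^ M * 1 := by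
    rw [mul_add, hscale, zpow_neg, zpow_natCast, mul_inv_cancel₀ h2M.ne', mul_one]
    exact_mod_cast hnat
  exact le_of_mul_le_mul_left this h2M

lemma kraftSum_update_pred [DecidableEq ι] (d : ι → ℕ) {i : ι} (hi : 1 ≤ d i) :
    kraftSum (Function.update d i (d i - 1)) = kraftSum d + (2 : ℝ) ^ (-(d i : ℤ)) := by
  simp only [kraftSum]
  rw [← add_sum_erase _ _ (mem_univ i), ← add_sum_erase _ _ (mem_univ i),
    sum_congr rfl fun j hj => by rw [Function.update_of_ne (ne_of_mem_erase hj)],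
    Function.update_self, Nat.cast_sub hi, Nat.cast_one, neg_sub, sub_eq_neg_add,
    zpow_add_one₀ two_ne_zero]
  ring

theorem exists_le_kraftSum_eq_one [Nonempty ι] (d : ι → ℕ) (hd : kraftSum d ≤ 1) :
    ∃ d' : ι → ℕ, d' ≤ d ∧ kraftSum d' = 1 := by
  classical
  induction hN : ∑ i, d i using Nat.strong_induction_on generalizing d with
  | _ N ih =>
    rcases hd.lt_or_eq with hlt | heq
    · obtain ⟨i₀, -, hmax⟩ := exists_max_image univ d univ_nonempty
      have hroom := kraftSum_add_le_one_of_lt_one (fun i => hmax i (mem_univ i)) hlt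
      have hpos : 0 < kraftSum d := by unfold kraftSum; positivity
      have hi₀ : 1 ≤ d i₀ := by
        by_contra! h
        rw [Nat.lt_one_iff.mp h, Nat.cast_zero, neg_zero, zpow_zero] at hroom
        linarith
      set e := Function.update d i₀ (d i₀ - 1)
      have hed : e ≤ d := fun j => by
        by_cases hj : j = i₀
        · subst hj; simp [e]
        · simp [e, hj]
      have hlen : ∑ i, e i < N :=
        hN ▸ sum_lt_sum (fun j _ => hed j) ⟨i₀, mem_univ _, by simp [e]; omega⟩
      have he : kraftSum e ≤ 1 := kraftSum_update_pred d hi₀ ▸ hroom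
      obtain ⟨d', hd'e, hd'⟩ := ih _ hlen e he rfl
      exact ⟨d', hd'e.trans hed, hd'⟩
    · exact ⟨d, le_rfl, heq⟩

end Kraft

lemma mul_logb_div_lt_self {p q : ℝ} (hp : 0 < p) (hq : 0 < q) (hpq : p < 2 * q) :
    p * logb 2 (p / q) < p := by
  have : logb 2 (p / q) < 1 := by
    rw [logb_lt_iff_lt_rpow one_lt_two (div_pos hp hq), rpow_one, div_lt_iff₀ hq]
    linarith
  nlinarith

/-- There exist natural numbers `d i` so that `q i = 2^{-d i}` is a probability
distribution with `p i < 4 q i` for all `i` and `D(P‖Q) < 2`. -/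
theorem stmt3 (n : ℕ) (p : Fin n → ℝ)
    (hp : ∀ i, 0 < p i) (hsum : ∑ i, p i = 1) :
    ∃ d : Fin n → ℕ,
      (∑ i, (2 : ℝ) ^ (-(d i : ℤ)) = 1) ∧
      (∀ i, p i < 4 * (2 : ℝ) ^ (-(d i : ℤ))) ∧
      ∑ i, p i * Real.logb 2 (p i / (2 : ℝ) ^ (-(d i : ℤ))) < 2 := by
  have : Nonempty (Fin n) := by
    by_contra h
    simp [not_nonempty_iff.mp h] at hsum
  have hp1 : ∀ i, p i ≤ 1 := fun i =>
    hsum ▸ single_le_sum (fun j _ => (hp j).le) (mem_univ i)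
  let d₀ i := shannonLength (p i)
  have hkraft : kraftSum d₀ ≤ 1 :=
    hsum ▸ sum_le_sum fun i _ => zpow_neg_shannonLength_le (hp i)
  obtain ⟨d, hdd₀, hd⟩ := exists_le_kraftSum_eq_one d₀ hkraft
  have hq : ∀ i, p i < 2 * (2 : ℝ) ^ (-(d i : ℤ)) := fun i =>
    (lt_two_mul_zpow_neg_shannonLength (hp i) (hp1 i)).trans_le <| by
      gcongr
      · norm_num
      · exact hdd₀ i
  refine ⟨d, hd, fun i => (hq i).trans_le (by gcongr; norm_num), ?_⟩
  calc ∑ i, p i * logb 2 (p i / (2 : ℝ) ^ (-(d i : ℤ)))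
      < ∑ i, p i := sum_lt_sum_of_nonempty univ_nonempty fun i _ =>
        mul_logb_div_lt_self (hp i) (by positivity) (hq i)
    _ < 2 := by rw [hsum]; norm_num
end

section
/- Let k ≥ 3 be an integer, let P = p_1, …, p_n be a probability distribution on {1, …, n} with every p_i > 0, and let Q' = q'_1, …, q'_n be a probability distribution with every q'_i > 0 satisfying p_i / q'_i < 2 + 1/2^{k-4} for all i. Let B = { i : p_i / q'_i ≥ 1 + 1/2^{k-3} }, let N = ∑_{i ∈ B} 2 q'_i + ∑_{i ∉ B} q'_i, and define q_i = 2 q'_i / N for i ∈ B and q_i = q'_i / N for i ∉ B. Then q_1, …, q_n is a probability distribution with every q_i > 0, and p_i / q_i < 2 + 1/2^{k-3} for every i. -/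
/-!
Doubling the weights of `q'` on `B` costs a normalizer `N = 1 + q'(B)`, and on `B` we have
`p ≥ (1 + ε) q'` with `ε = 2^{-(k-3)}`, so `(1 + ε) q'(B) ≤ p(B) ≤ 1` and hence `(1 + ε) N ≤ 2 + ε`.
Since `2 + 2^{-(k-4)} = (1 + ε) · 2`, the hypothesis gives `p < (1 + ε) · 2q'` on `B`, while
`p < (1 + ε) q'` off `B`; in both cases `p / q = p N / (w q') < (1 + ε) N ≤ 2 + ε`, where `w ∈ {1, 2}`.
-/

open Finset

section Reweighting

variable {ι : Type*} [Fintype ι] [DecidableEq ι]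

theorem sum_ite_mem_two_mul (q : ι → ℝ) (B : Finset ι) :
    ∑ i, (if i ∈ B then 2 * q i else q i) = ∑ i ∈ B, 2 * q i + ∑ i ∈ Bᶜ, q i := by
  rw [sum_ite]
  congr 2 <;> ext i <;> simp

theorem sum_two_mul_add_sum_compl (q : ι → ℝ) (B : Finset ι) :
    ∑ i ∈ B, 2 * q i + ∑ i ∈ Bᶜ, q i = ∑ i, q i + ∑ i ∈ B, q i := by
  rw [← sum_add_sum_compl B q]
  simp only [two_mul, sum_add_distrib]
  ring

end Reweighting

theorem mul_sum_le_sum_of_mul_le {ι : Type*} [Fintype ι] {p q : ι → ℝ} {B : Finset ι} {c : ℝ}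
    (hp : ∀ i, 0 ≤ p i) (hB : ∀ i ∈ B, c * q i ≤ p i) : c * ∑ i ∈ B, q i ≤ ∑ i, p i :=
  calc c * ∑ i ∈ B, q i = ∑ i ∈ B, c * q i := mul_sum B q c
    _ ≤ ∑ i ∈ B, p i := sum_le_sum hB
    _ ≤ ∑ i, p i := sum_le_univ_sum_of_nonneg hp

theorem div_div_lt_of_lt_mul {p x N c d : ℝ} (hx : 0 < x) (hN : 0 < N) (hp : p < c * x)
    (hcN : c * N ≤ d) : p / (x / N) < d := by
  rw [div_div_eq_mul_div, div_lt_iff₀ hx]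
  calc p * N < c * x * N := by gcongr
    _ = c * N * x := by ring
    _ ≤ d * x := by gcongr

theorem one_div_two_zpow_sub_one (m : ℤ) : 1 / (2 : ℝ) ^ (m - 1) = 2 * (1 / 2 ^ m) := by
  rw [zpow_sub_one₀ two_ne_zero]
  field_simp

theorem stmt7_general (n : ℕ) (k : ℕ)
    (p q' : Fin n → ℝ)
    (hp : ∀ i, 0 < p i) (hpsum : ∑ i, p i = 1)
    (hq' : ∀ i, 0 < q' i) (hq'sum : ∑ i, q' i = 1)
    (hratio : ∀ i, p i / q' i < 2 + 1 / (2 : ℝ) ^ ((k : ℤ) - 4))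
    (B : Finset (Fin n))
    (hB : ∀ i, i ∈ B ↔ 1 + 1 / (2 : ℝ) ^ ((k : ℤ) - 3) ≤ p i / q' i)
    (N : ℝ) (hN : N = ∑ i ∈ B, 2 * q' i + ∑ i ∈ Bᶜ, q' i)
    (q : Fin n → ℝ)
    (hq : ∀ i, q i = if i ∈ B then 2 * q' i / N else q' i / N) :
    (∀ i, 0 < q i) ∧ (∑ i, q i = 1) ∧
      ∀ i, p i / q i < 2 + 1 / (2 : ℝ) ^ ((k : ℤ) - 3) := by
  set ε : ℝ := 1 / (2 : ℝ) ^ ((k : ℤ) - 3)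
  have hB_mass : (1 + ε) * ∑ i ∈ B, q' i ≤ 1 :=
    (mul_sum_le_sum_of_mul_le (fun i ↦ (hp i).le) fun i hi ↦
      (le_div_iff₀ (hq' i)).mp ((hB i).mp hi)).trans hpsum.le
  have hN_eq : N = 1 + ∑ i ∈ B, q' i := by rw [hN, sum_two_mul_add_sum_compl, hq'sum]
  have hN_pos : 0 < N := by
    linarith [sum_nonneg fun i (_ : i ∈ B) ↦ (hq' i).le]
  have hN_le : (1 + ε) * N ≤ 2 + ε := by rw [hN_eq]; linarith
  refine ⟨fun i ↦ ?_, ?_, fun i ↦ ?_⟩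
  · rw [hq i]
    split_ifs <;> exact div_pos (by linarith [hq' i]) hN_pos
  · simp_rw [hq, ← ite_div, ← sum_div, sum_ite_mem_two_mul, ← hN]
    exact div_self hN_pos.ne'
  · rw [hq i]
    split_ifs with hi
    · have hratio' : p i < (1 + ε) * (2 * q' i) := by
        have := hratio i
        rw [show (k : ℤ) - 4 = (k : ℤ) - 3 - 1 by ring, one_div_two_zpow_sub_one,
          div_lt_iff₀ (hq' i)] at this
        linarith
      exact div_div_lt_of_lt_mul (by linarith [hq' i]) hN_pos hratio' hN_le
    · have hratio' : p i < (1 + ε) * q' i :=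
        (div_lt_iff₀ (hq' i)).mp (lt_of_not_ge (mt (hB i).mpr hi))
      exact div_div_lt_of_lt_mul (hq' i) hN_pos hratio' hN_le

/-- Inductive step of the tradeoff theorem: doubling the probabilities on `B` and
renormalizing yields a probability distribution with `p i / q i < 2 + 1/2^{k-3}`. -/
theorem stmt7 (n : ℕ) (k : ℕ) (hk : 3 ≤ k)
    (p q' : Fin n → ℝ)
    (hp : ∀ i, 0 < p i) (hpsum : ∑ i, p i = 1)
    (hq' : ∀ i, 0 < q' i) (hq'sum : ∑ i, q' i = 1)
    (hratio : ∀ i, p i / q' i < 2 + 1 / (2 : ℝ) ^ ((k : ℤ) - 4))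
    (B : Finset (Fin n))
    (hB : ∀ i, i ∈ B ↔ 1 + 1 / (2 : ℝ) ^ ((k : ℤ) - 3) ≤ p i / q' i)
    (N : ℝ) (hN : N = ∑ i ∈ B, 2 * q' i + ∑ i ∈ Bᶜ, q' i)
    (q : Fin n → ℝ)
    (hq : ∀ i, q i = if i ∈ B then 2 * q' i / N else q' i / N) :
    (∀ i, 0 < q i) ∧ (∑ i, q i = 1) ∧
      ∀ i, p i / q i < 2 + 1 / (2 : ℝ) ^ ((k : ℤ) - 3) :=
  stmt7_general n k p q' hp hpsum hq' hq'sum hratio B hB N hN q hq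
end

section
/- Let P = p_1, …, p_n be a probability distribution on {1, …, n} with every p_i > 0, let c ≥ 1 be real, let r_1, …, r_t be distinct elements of {1, …, n} with p_{r_1} ≥ p_{r_2} ≥ … ≥ p_{r_t}, and suppose p_i ≤ 1/n^{1/(c+1)} for every i ∉ R, where R = {r_1, …, r_t}. Then H(P) ≥ ∑_{j=1}^t p_{r_j} log₂ j + (1/(c+1)) · ∑_{i ∉ R} p_i log₂ n. -/
/-!
Split `H(P)` into the part on `R` and the part off `R`, and bound `log₂ (1 / p_i)` termwise.
On `R`, the `j` largest values `p_{r_1} ≥ … ≥ p_{r_j}` sum to at most `1`, so `j · p_{r_j} ≤ 1`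
and `log₂ (1 / p_{r_j}) ≥ log₂ j`. Off `R`, `1 / p_i ≥ n^{1/(c+1)}`, so
`log₂ (1 / p_i) ≥ log₂ n / (c+1)`.
-/

open Finset Real

lemma succ_mul_le_sum_of_antitone {ι : Type*} [Fintype ι] {p : ι → ℝ} (hp : ∀ i, 0 ≤ p i)
    {t : ℕ} {r : Fin t → ι} (hr : Function.Injective r) (hanti : Antitone (p ∘ r))
    (j : Fin t) : (j.val + 1 : ℝ) * p (r j) ≤ ∑ i, p i :=
  calc (j.val + 1 : ℝ) * p (r j) = ∑ _j' ∈ Iic j, p (r j) := by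
        simp only [sum_const, Fin.card_Iic, nsmul_eq_mul]; push_cast; ring
    _ ≤ ∑ j' ∈ Iic j, p (r j') := sum_le_sum fun j' hj' => hanti (mem_Iic.mp hj')
    _ = ∑ i ∈ (Iic j).map ⟨r, hr⟩, p i := (sum_map _ ⟨r, hr⟩ p).symm
    _ ≤ ∑ i, p i := sum_le_sum_of_subset_of_nonneg (subset_univ _) fun i _ _ => hp i

lemma logb_le_logb_one_div_of_mul_le_one {b a x : ℝ} (hb : 1 < b) (ha : 0 < a) (hx : 0 < x)
    (h : a * x ≤ 1) : logb b a ≤ logb b (1 / x) :=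
  logb_le_logb_of_le hb ha ((le_div_iff₀ hx).mpr h)

theorem stmt10_general (n t : ℕ) (p : Fin n → ℝ) (c : ℝ)
    (hp : ∀ i, 0 < p i) (hsum : ∑ i, p i = 1)
    (r : Fin t → Fin n) (hr : Function.Injective r)
    (hord : ∀ j j' : Fin t, j ≤ j' → p (r j') ≤ p (r j))
    (hsmall : ∀ i, i ∉ Set.range r → p i ≤ 1 / (n : ℝ) ^ (1 / (c + 1))) :
    ∑ i, p i * Real.logb 2 (1 / p i) ≥
      ∑ j : Fin t, p (r j) * Real.logb 2 (j.val + 1) +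
        (1 / (c + 1)) *
          ∑ i ∈ (Finset.image r Finset.univ)ᶜ, p i * Real.logb 2 n := by
  rw [ge_iff_le, ← sum_add_sum_compl (image r univ), sum_image fun _ _ _ _ h => hr h, mul_sum]
  refine add_le_add (sum_le_sum fun j _ => ?_) (sum_le_sum fun i hi => ?_)
  · have hle := succ_mul_le_sum_of_antitone (fun i => (hp i).le) hr (fun _ _ h => hord _ _ h) j
    exact mul_le_mul_of_nonneg_left (logb_le_logb_one_div_of_mul_le_one one_lt_two
      (by positivity) (hp _) (hsum ▸ hle)) (hp _).le
  · have hn : (0 : ℝ) < n := Nat.cast_pos.mpr i.pos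
    have hpow : (0 : ℝ) < (n : ℝ) ^ (1 / (c + 1)) := rpow_pos_of_pos hn _
    have hi' : i ∉ Set.range r := by simpa using hi
    have hlog := logb_le_logb_one_div_of_mul_le_one one_lt_two hpow (hp i)
      ((le_div_iff₀' hpow).mp (hsmall i hi'))
    rw [logb_rpow_eq_mul_logb_of_pos hn] at hlog
    rw [mul_left_comm]
    exact mul_le_mul_of_nonneg_left hlog (hp i).le

/-- Entropy lower bound: if the `t` largest probabilities are `p (r 1) ≥ … ≥ p (r t)`
and all probabilities outside `R` are at most `n^{-1/(c+1)}`, then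
`H(P) ≥ ∑_j p_{r_j} log₂ j + (∑_{i∉R} p_i log₂ n)/(c+1)`. -/
theorem stmt10 (n t : ℕ) (p : Fin n → ℝ) (c : ℝ) (hc : 1 ≤ c)
    (hp : ∀ i, 0 < p i) (hsum : ∑ i, p i = 1)
    (r : Fin t → Fin n) (hr : Function.Injective r)
    (hord : ∀ j j' : Fin t, j ≤ j' → p (r j') ≤ p (r j))
    (hsmall : ∀ i, i ∉ Set.range r → p i ≤ 1 / (n : ℝ) ^ (1 / (c + 1))) :
    ∑ i, p i * Real.logb 2 (1 / p i) ≥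
      ∑ j : Fin t, p (r j) * Real.logb 2 (j.val + 1) +
        (1 / (c + 1)) *
          ∑ i ∈ (Finset.image r Finset.univ)ᶜ, p i * Real.logb 2 n :=
  stmt10_general n t p c hp hsum r hr hord hsmall
end
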